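/- Let Ω ⊂ ℝⁿ be open, a ∈ C¹_c(Ω), φ ∈ C²(Ω), with γ := inf_Ω |∇φ| > 0 and M := sup_Ω ‖∇²φ‖ < ∞. Then the function u = div(a ∇φ/|∇φ|²) satisfies ‖u‖_{L¹(Ω)} ≤ (1/γ) ‖∇a‖_{L¹(Ω)} + ((n+2)M/γ²) ‖a‖_{L¹(Ω)}. -/

import Mathlib

/-!
With `V = ∇φ / |∇φ|²`, the product rule gives `div (a V) = ⟪∇a, V⟫ + a div V` and
`div V = Δφ / |∇φ|² - 2 ⟪∇φ, ∇²φ ∇φ⟫ / |∇φ|⁴`. Since `|V| = 1 / |∇φ| ≤ 1 / γ`,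
`|Δφ| ≤ n ‖∇²φ‖` and `|⟪∇φ, ∇²φ ∇φ⟫| ≤ ‖∇²φ‖ |∇φ|²`, the integrand is bounded pointwise on `Ω`
by `|∇a| / γ + (n + 2) M |a| / γ²`, which is integrable because `a` is `C¹` with compact support.
-/

open MeasureTheory

/-- Divergence of a vector field on `ℝⁿ` (Euclidean space). -/
noncomputable def ediv {n : ℕ} (F : EuclideanSpace ℝ (Fin n) → EuclideanSpace ℝ (Fin n))
    (x : EuclideanSpace ℝ (Fin n)) : ℝ :=
  ∑ i, fderiv ℝ F x (EuclideanSpace.single i 1) i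

open scoped RealInnerProductSpace

theorem EuclideanSpace.sum_map_single_mul {ι : Type*} [Fintype ι] [DecidableEq ι]
    (L : EuclideanSpace ℝ ι →L[ℝ] ℝ) (v : EuclideanSpace ℝ ι) :
    ∑ i, L (EuclideanSpace.single i 1) * v i = L v := by
  conv_rhs => rw [← (EuclideanSpace.basisFun ι ℝ).sum_repr v]
  simp [mul_comm]

theorem ContDiffAt.differentiableAt_gradient {F : Type*} [NormedAddCommGroup F]
    [InnerProductSpace ℝ F] [CompleteSpace F] {f : F → ℝ} {x : F} (hf : ContDiffAt ℝ 2 f x) :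
    DifferentiableAt ℝ (gradient f) x :=
  (InnerProductSpace.toDual ℝ F).symm.differentiableAt.comp x
    ((hf.fderiv_right (m := 1) (by norm_num)).differentiableAt one_ne_zero)

theorem norm_gradient_eq_norm_fderiv {F : Type*} [NormedAddCommGroup F]
    [InnerProductSpace ℝ F] [CompleteSpace F] (f : F → ℝ) (x : F) :
    ‖gradient f x‖ = ‖fderiv ℝ f x‖ :=
  LinearIsometryEquiv.norm_map _ _

section Divergence

variable {n : ℕ} {x : EuclideanSpace ℝ (Fin n)}

theorem abs_ediv_le (F : EuclideanSpace ℝ (Fin n) → EuclideanSpace ℝ (Fin n)) :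
    |ediv F x| ≤ n * ‖fderiv ℝ F x‖ := by
  calc |ediv F x| ≤ ∑ i, |fderiv ℝ F x (EuclideanSpace.single i 1) i| :=
        Finset.abs_sum_le_sum_abs _ _
    _ ≤ ∑ _i : Fin n, ‖fderiv ℝ F x‖ := by
        gcongr with i
        calc |fderiv ℝ F x (EuclideanSpace.single i 1) i|
            ≤ ‖fderiv ℝ F x (EuclideanSpace.single i 1)‖ := by
              simpa using PiLp.norm_apply_le (fderiv ℝ F x (EuclideanSpace.single i 1)) i
          _ ≤ ‖fderiv ℝ F x‖ := by
            simpa using (fderiv ℝ F x).le_opNorm (EuclideanSpace.single i 1)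
    _ = n * ‖fderiv ℝ F x‖ := by simp

theorem ediv_smul {f : EuclideanSpace ℝ (Fin n) → ℝ}
    {V : EuclideanSpace ℝ (Fin n) → EuclideanSpace ℝ (Fin n)}
    (hf : DifferentiableAt ℝ f x) (hV : DifferentiableAt ℝ V x) :
    ediv (fun y => f y • V y) x = ⟪gradient f x, V x⟫ + f x * ediv V x := by
  rw [ediv, ediv, fderiv_fun_smul hf hV, inner_gradient_left,
    ← EuclideanSpace.sum_map_single_mul (fderiv ℝ f x) (V x), Finset.mul_sum,
    ← Finset.sum_add_distrib]
  simp only [add_apply, smul_apply,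
    ContinuousLinearMap.smulRight_apply, PiLp.add_apply, PiLp.smul_apply, smul_eq_mul]
  exact Finset.sum_congr rfl fun i _ => add_comm _ _

variable {G : EuclideanSpace ℝ (Fin n) → EuclideanSpace ℝ (Fin n)}

theorem fderiv_inv_norm_sq_apply (hG : DifferentiableAt ℝ G x) (hx : G x ≠ 0)
    (v : EuclideanSpace ℝ (Fin n)) :
    fderiv ℝ (fun y => (‖G y‖ ^ 2)⁻¹) x v = -(2 * ⟪G x, fderiv ℝ G x v⟫) / ‖G x‖ ^ 4 := by
  have hG2 : ‖G x‖ ^ 2 ≠ 0 := by positivity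
  have h : HasFDerivAt (fun y => (‖G y‖ ^ 2)⁻¹) _ x :=
    (hasFDerivAt_inv hG2).comp x hG.hasFDerivAt.norm_sq
  rw [h.fderiv]
  simp only [ContinuousLinearMap.comp_smul, smul_apply, ContinuousLinearMap.comp_apply,
    coe_innerSL_apply, ContinuousLinearMap.toSpanSingleton_apply, smul_eq_mul, nsmul_eq_mul]
  ring

theorem ediv_inv_norm_sq_smul (hG : DifferentiableAt ℝ G x) (hx : G x ≠ 0) :
    ediv (fun y => (‖G y‖ ^ 2)⁻¹ • G y) x =
      ediv G x / ‖G x‖ ^ 2 - 2 * ⟪G x, fderiv ℝ G x (G x)⟫ / ‖G x‖ ^ 4 := by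
  have hG2 : ‖G x‖ ^ 2 ≠ 0 := by positivity
  have hd : DifferentiableAt ℝ (fun y => (‖G y‖ ^ 2)⁻¹) x :=
    (hG.norm_sq ℝ).inv hG2
  rw [ediv_smul hd hG, inner_gradient_left, fderiv_inv_norm_sq_apply hG hx]
  ring


theorem abs_ediv_inv_norm_sq_smul_le (hG : DifferentiableAt ℝ G x) (hx : G x ≠ 0) :
    |ediv (fun y => (‖G y‖ ^ 2)⁻¹ • G y) x| ≤ (n + 2) * ‖fderiv ℝ G x‖ / ‖G x‖ ^ 2 := by
  set H := fderiv ℝ G x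
  have hGpos : 0 < ‖G x‖ := norm_pos_iff.mpr hx
  have hinner : |⟪G x, H (G x)⟫| ≤ ‖H‖ * ‖G x‖ ^ 2 :=
    calc |⟪G x, H (G x)⟫| ≤ ‖G x‖ * ‖H (G x)‖ := abs_real_inner_le_norm _ _
      _ ≤ ‖G x‖ * (‖H‖ * ‖G x‖) := by gcongr; exact H.le_opNorm _
      _ = ‖H‖ * ‖G x‖ ^ 2 := by ring
  rw [ediv_inv_norm_sq_smul hG hx]
  calc |ediv G x / ‖G x‖ ^ 2 - 2 * ⟪G x, H (G x)⟫ / ‖G x‖ ^ 4|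
      ≤ |ediv G x| / ‖G x‖ ^ 2 + 2 * |⟪G x, H (G x)⟫| / ‖G x‖ ^ 4 := by
        refine (abs_sub _ _).trans_eq ?_
        rw [abs_div, abs_div, abs_mul, abs_two, abs_of_pos (by positivity : 0 < ‖G x‖ ^ 2),
          abs_of_pos (by positivity : 0 < ‖G x‖ ^ 4)]
    _ ≤ n * ‖H‖ / ‖G x‖ ^ 2 + 2 * (‖H‖ * ‖G x‖ ^ 2) / ‖G x‖ ^ 4 := by
        gcongr
        exact abs_ediv_le G
    _ = (n + 2) * ‖H‖ / ‖G x‖ ^ 2 := by field_simp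

theorem abs_ediv_smul_inv_norm_sq_smul_le {a : EuclideanSpace ℝ (Fin n) → ℝ} {γ M : ℝ}
    (ha : DifferentiableAt ℝ a x) (hG : DifferentiableAt ℝ G x) (hγ : 0 < γ)
    (hγG : γ ≤ ‖G x‖) (hM : ‖fderiv ℝ G x‖ ≤ M) :
    |ediv (fun y => a y • ((‖G y‖ ^ 2)⁻¹ • G y)) x| ≤
      (1 / γ) * ‖gradient a x‖ + ((n + 2) * M / γ ^ 2) * |a x| := by
  have hGpos : 0 < ‖G x‖ := hγ.trans_le hγG
  have hM0 : 0 ≤ M := (norm_nonneg _).trans hM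
  have hx : G x ≠ 0 := norm_pos_iff.mp hGpos
  have hV : DifferentiableAt ℝ (fun y => (‖G y‖ ^ 2)⁻¹ • G y) x :=
    ((hG.norm_sq ℝ).inv (by positivity)).smul hG
  have hnormV : ‖(‖G x‖ ^ 2)⁻¹ • G x‖ = 1 / ‖G x‖ := by
    rw [norm_smul, norm_inv, norm_pow, norm_norm]
    field_simp
  rw [ediv_smul ha hV]
  calc |⟪gradient a x, (‖G x‖ ^ 2)⁻¹ • G x⟫ + a x * ediv (fun y => (‖G y‖ ^ 2)⁻¹ • G y) x|
      ≤ ‖gradient a x‖ * (1 / ‖G x‖) +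
          |a x| * ((n + 2) * ‖fderiv ℝ G x‖ / ‖G x‖ ^ 2) := by
        refine (abs_add_le _ _).trans (add_le_add ?_ ?_)
        · exact (abs_real_inner_le_norm _ _).trans_eq (by rw [hnormV])
        · rw [abs_mul]
          gcongr
          exact abs_ediv_inv_norm_sq_smul_le hG hx
    _ ≤ ‖gradient a x‖ * (1 / γ) + |a x| * ((n + 2) * M / γ ^ 2) := by gcongr
    _ = (1 / γ) * ‖gradient a x‖ + ((n + 2) * M / γ ^ 2) * |a x| := by ring

end Divergence

theorem stmt4_general {n : ℕ} (Ω : Set (EuclideanSpace ℝ (Fin n))) (hΩ : IsOpen Ω)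
    (a : EuclideanSpace ℝ (Fin n) → ℝ) (ha : ContDiff ℝ 1 a)
    (hac : HasCompactSupport a)
    (φ : EuclideanSpace ℝ (Fin n) → ℝ) (hφ : ContDiffOn ℝ 2 φ Ω)
    (γ M : ℝ) (hγ : 0 < γ)
    (hlow : ∀ x ∈ Ω, γ ≤ ‖gradient φ x‖)
    (hHess : ∀ x ∈ Ω, ‖fderiv ℝ (gradient φ) x‖ ≤ M)
    (u : EuclideanSpace ℝ (Fin n) → ℝ)
    (hu : ∀ x ∈ Ω, u x =
      ediv (fun y => a y • ((‖gradient φ y‖ ^ 2)⁻¹ • gradient φ y)) x) :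
    ∫ x in Ω, |u x| ≤
      (1 / γ) * (∫ x in Ω, ‖gradient a x‖) +
        ((n + 2) * M / γ ^ 2) * (∫ x in Ω, |a x|) := by
  have hint_grad : Integrable (fun x => ‖gradient a x‖) := by
    simp only [norm_gradient_eq_norm_fderiv]
    exact (ha.continuous_fderiv one_ne_zero).norm.integrable_of_hasCompactSupport
      (hac.fderiv ℝ).norm
  have hint_a : Integrable (fun x => |a x|) :=
    ha.continuous.abs.integrable_of_hasCompactSupport hac.abs
  rw [← integral_const_mul, ← integral_const_mul,
    ← integral_add (hint_grad.const_mul _).integrableOn (hint_a.const_mul _).integrableOn]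
  -- `integral_mono_of_nonneg` asks integrability only of the majorant, not of `|u|`
  refine integral_mono_of_nonneg (Filter.Eventually.of_forall fun x => abs_nonneg _)
    ((hint_grad.const_mul _).add (hint_a.const_mul _)).integrableOn
    (ae_restrict_of_forall_mem hΩ.measurableSet fun x hx => ?_)
  show |u x| ≤ _
  rw [hu x hx]
  exact abs_ediv_smul_inv_norm_sq_smul_le (ha.differentiable one_ne_zero x)
    (hφ.contDiffAt (hΩ.mem_nhds hx)).differentiableAt_gradient hγ (hlow x hx) (hHess x hx)

theorem stmt4 {n : ℕ} (Ω : Set (EuclideanSpace ℝ (Fin n))) (hΩ : IsOpen Ω)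
    (a : EuclideanSpace ℝ (Fin n) → ℝ) (ha : ContDiff ℝ 1 a)
    (hac : HasCompactSupport a) (has : tsupport a ⊆ Ω)
    (φ : EuclideanSpace ℝ (Fin n) → ℝ) (hφ : ContDiffOn ℝ 2 φ Ω)
    (γ M : ℝ) (hγ : 0 < γ)
    (hlow : ∀ x ∈ Ω, γ ≤ ‖gradient φ x‖)
    (hHess : ∀ x ∈ Ω, ‖fderiv ℝ (gradient φ) x‖ ≤ M)
    (u : EuclideanSpace ℝ (Fin n) → ℝ)
    (hu : ∀ x ∈ Ω, u x =
      ediv (fun y => a y • ((‖gradient φ y‖ ^ 2)⁻¹ • gradient φ y)) x) :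
    ∫ x in Ω, |u x| ≤
      (1 / γ) * (∫ x in Ω, ‖gradient a x‖) +
        ((n + 2) * M / γ ^ 2) * (∫ x in Ω, |a x|) :=
  stmt4_general Ω hΩ a ha hac φ hφ γ M hγ hlow hHess u hu
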